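/- Let M be a matroid and let 𝒞' be a finite collection of circuits of M. Then 𝒞' is perfect if and only if there exists a basis B of M such that every C ∈ 𝒞' is a fundamental circuit with respect to B, i.e., for every C ∈ 𝒞' there is an element e ∉ B such that C is the unique circuit of M contained in B ∪ {e}. -/

import Mathlib

open Set Matroid
open scoped Matroid

namespace PaperLift

variable {α : Type} {β : Type}

/-- A circuit of a matroid: a minimal dependent set. -/
def Circuit (M : Matroid α) (C : Set α) : Prop :=
  M.Dep C ∧ ∀ D, D ⊂ C → M.Indep D

/-- The rank of a set in a matroid: the supremum of cardinalities of independent subsets. -/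
noncomputable def rk (M : Matroid α) (X : Set α) : ℕ :=
  sSup {n | ∃ I, M.Indep I ∧ I ⊆ X ∧ I.ncard = n}

/-- The rank of a matroid. -/
noncomputable def rank (M : Matroid α) : ℕ := rk M M.E

/-- Deletion of a set from a matroid. -/
def delete (M : Matroid α) (D : Set α) : Matroid α := M ↾ (M.E \ D)

/-- Contraction of a set in a matroid, defined by duality. -/
noncomputable def contract (M : Matroid α) (C : Set α) : Matroid α := ((M✶) ↾ (M.E \ C))✶

/-- A hyperplane: a maximal proper flat. -/
def Hyperplane (M : Matroid α) (H : Set α) : Prop :=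
  M.IsFlat H ∧ H ≠ M.E ∧ ∀ F, M.IsFlat F → H ⊂ F → F = M.E

/-- A circuit-hyperplane: a circuit that is also a hyperplane. -/
def CircuitHyperplane (M : Matroid α) (C : Set α) : Prop :=
  Circuit M C ∧ Hyperplane M C

/-- `L` is a lift of `M`: there is a matroid `K` on a ground set `E ∪ F`, with `F` disjoint
from `E = M.E`, such that `M = K / F` and `L = K \ F` (up to the canonical embedding). -/
def IsLiftOf (L M : Matroid α) : Prop :=
  L.E = M.E ∧ ∃ (β : Type) (K : Matroid (α ⊕ β)) (F : Set (α ⊕ β)),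
    Disjoint (Sum.inl '' M.E) F ∧ K.E = Sum.inl '' M.E ∪ F ∧
    contract K F = M.map Sum.inl Sum.inl_injective.injOn ∧
    delete K F = L.map Sum.inl Sum.inl_injective.injOn

/-- `N`, a matroid whose ground set is the set of circuits of `M`, satisfies the lift
condition for `M`. -/
def LiftCondition (M : Matroid α) (N : Matroid (Set α)) : Prop :=
  N.E = {C | Circuit M C} ∧
  ∀ C₁ C₂, Circuit M C₁ → Circuit M C₂ →
    (C₁ ∪ C₂).ncard = rk M (C₁ ∪ C₂) + 2 →
    ∀ C, Circuit M C → C ⊆ C₁ ∪ C₂ → C ∈ N.closure {C₁, C₂}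

/-- `L` has the rank function of the lift `M^N` of `M` constructed from `N`. -/
def IsLiftMatroid (M : Matroid α) (N : Matroid (Set α)) (L : Matroid α) : Prop :=
  L.E = M.E ∧ ∀ X ⊆ M.E, rk L X = rk M X + rk N {C | Circuit M C ∧ C ⊆ X}

/-- Matroid isomorphism: a bijection between ground sets preserving independence
in both directions. -/
def Iso (M : Matroid α) (N : Matroid β) : Prop :=
  ∃ e : α → β, InjOn e M.E ∧ e '' M.E = N.E ∧ ∀ I ⊆ M.E, (M.Indep I ↔ N.Indep (e '' I))

/-- Representability of a matroid over a field `F`. -/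
def Representable (M : Matroid α) (F : Type) [Field F] : Prop :=
  ∃ (W : Type) (_ : AddCommGroup W) (_ : Module F W) (φ : α → W),
    ∀ I ⊆ M.E, (M.Indep I ↔ InjOn φ I ∧ LinearIndependent F (fun e : I => φ e))

/-- A rank-`r` matroid is sparse paving if every `r`-element subset of the ground set is
either a base or a circuit-hyperplane. -/
def SparsePaving (M : Matroid α) : Prop :=
  ∀ S ⊆ M.E, S.ncard = rank M → (M.IsBase S ∨ CircuitHyperplane M S)

/-- A perfect collection of circuits. -/
def Perfect (M : Matroid α) (Cs : Set (Set α)) : Prop :=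
  Cs.Finite ∧ (∀ C ∈ Cs, Circuit M C) ∧
  (⋃₀ Cs).ncard = rk M (⋃₀ Cs) + Cs.ncard ∧
  ∀ C ∈ Cs, ¬ C ⊆ ⋃₀ (Cs \ {C})

/-- A linear class of circuits. -/
def LinearClass (M : Matroid α) (𝒞 : Set (Set α)) : Prop :=
  (∀ C ∈ 𝒞, Circuit M C) ∧
  ∀ C₁ ∈ 𝒞, ∀ C₂ ∈ 𝒞, (C₁ ∪ C₂).ncard = rk M (C₁ ∪ C₂) + 2 →
    ∀ C, Circuit M C → C ⊆ C₁ ∪ C₂ → C ∈ 𝒞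

/-- The circulant sets `C_i ⊆ [2t]` from the construction of `K(r,t)`. -/
def Ci (r t i : ℕ) : Set ℕ :=
  (fun k => (k + 2 * (i - 1) - 1) % (2 * t) + 1) '' (Set.Icc 1 (r - 2))

/-- The family `𝒞'(r,t)`. -/
def CC' (r t : ℕ) : Set (Set ℕ) :=
  (fun i => Ci r t i ∪ {2 * t + 1, 2 * t + 2}) '' (Set.Icc 1 t)

/-- The family `𝒞''(r,t)`. -/
def CC'' (r t : ℕ) : Set (Set ℕ) :=
  (fun i => Ci r t i ∪ Ci r t (i + 1)) '' (Set.Icc 1 (t - 1))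

/-- `K` is the matroid `K(r,t)`: a rank-`r` matroid on `[2t+2]` in which every `r`-element
subset is a base or a circuit-hyperplane, whose circuit-hyperplanes are exactly the members
of `𝒞'(r,t) ∪ 𝒞''(r,t)`. -/
def IsKrt (r t : ℕ) (K : Matroid ℕ) : Prop :=
  K.E = Set.Icc 1 (2 * t + 2) ∧ rank K = r ∧
  (∀ S ⊆ K.E, S.ncard = r → (K.IsBase S ∨ CircuitHyperplane K S)) ∧
  (∀ S, CircuitHyperplane K S ↔ S ∈ CC' r t ∪ CC'' r t)

/-- A group partition: a partition of the non-identity elements such that each part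
together with the identity is a subgroup. -/
def GroupPartition (Γ : Type) [Group Γ] (𝒜 : Set (Set Γ)) : Prop :=
  (∀ A ∈ 𝒜, A.Nonempty) ∧ (⋃₀ 𝒜 = {(1 : Γ)}ᶜ) ∧
  (∀ A ∈ 𝒜, ∀ B ∈ 𝒜, A ≠ B → Disjoint A B) ∧
  (∀ A ∈ 𝒜, ∃ H : Subgroup Γ, (H : Set Γ) = insert 1 A)

/-! Both sides are about a choice of private elements `e C ∈ C`, lying in no other member of
`Cs`. Given such a choice, `X = ⋃₀ Cs \ {e C}` spans `⋃₀ Cs` (each `e C` lies in the closure of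
`C \ {e C}`) and `|⋃₀ Cs| = |X| + |Cs|`, so the rank equation of perfection says exactly that `X`
is independent. An independent `X` extends to a base `B` with `C ⊆ insert (e C) B`, which makes
`C` the fundamental circuit of `e C`. Conversely, the elements `e C ∉ B` of fundamental circuits
are private (a fundamental circuit is determined by its element outside `B`), and `X ⊆ B`. -/

lemma circuit_iff_isCircuit {M : Matroid α} {C : Set α} : Circuit M C ↔ M.IsCircuit C := by
  rw [isCircuit_iff_forall_ssubset]
  rfl

/-- Holds also for infinite `I`, where both sides are the junk value `0`. -/
lemma rk_eq_ncard_of_isBasis' {M : Matroid α} {I X : Set α} (hI : M.IsBasis' I X) :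
    rk M X = I.ncard := by
  obtain hfin | hinf := I.finite_or_infinite
  · refine IsGreatest.csSup_eq ⟨⟨I, hI.indep, hI.subset, rfl⟩, ?_⟩
    rintro _ ⟨J, hJ, hJX, rfl⟩
    have hle : J.encard ≤ I.encard := hI.encard_eq_eRk ▸ hJ.encard_le_eRk_of_subset hJX
    exact ENat.toNat_le_toNat hle hfin.encard_lt_top.ne
  · rw [hinf.ncard]
    refine Nat.sSup_of_not_bddAbove fun ⟨n, hn⟩ => ?_
    obtain ⟨J, hJI, hJ⟩ := hinf.exists_subset_ncard_eq (n + 1)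
    have := hn ⟨J, hI.indep.subset hJI, hJI.trans hI.subset, hJ.2⟩
    omega

lemma rk_eq_ncard_iff_indep_of_subset_closure {M : Matroid α} {X U : Set α} (hX : X.Finite)
    (hXU : X ⊆ U) (hUX : U ⊆ M.closure X) : rk M U = X.ncard ↔ M.Indep X := by
  have hXE : X ⊆ M.E := hXU.trans (hUX.trans (M.closure_subset_ground X))
  obtain ⟨I, hI⟩ := M.exists_isBasis X
  have hIU : M.IsBasis I U := hI.indep.isBasis_of_subset_of_subset_closure
    (hI.subset.trans hXU) (hI.closure_eq_closure ▸ hUX)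
  rw [rk_eq_ncard_of_isBasis' hIU.isBasis']
  refine ⟨fun h => eq_of_subset_of_ncard_le hI.subset h.ge hX ▸ hI.indep, fun hXi => ?_⟩
  rw [hI.eq_of_subset_indep hXi hI.subset subset_rfl]

def IsPrivateChoice (Cs : Set (Set α)) (e : Cs → α) : Prop :=
  ∀ C : Cs, e C ∈ (C : Set α) ∧ ∀ C' : Cs, e C ∈ (C' : Set α) → C' = C

lemma exists_isPrivateChoice {Cs : Set (Set α)} (h : ∀ C ∈ Cs, ¬ C ⊆ ⋃₀ (Cs \ {C})) :
    ∃ e, IsPrivateChoice Cs e := by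
  choose e heC hprivate using fun C : Cs => not_subset.1 (h C C.2)
  refine ⟨e, fun C => ⟨heC C, fun C' heC' => ?_⟩⟩
  by_contra hne
  exact hprivate C ⟨C', ⟨C'.2, fun h => hne (Subtype.ext h)⟩, heC'⟩

section IsPrivateChoice

variable {Cs : Set (Set α)} {e : Cs → α}

lemma IsPrivateChoice.not_subset_sUnion_diff (he : IsPrivateChoice Cs e) {C : Set α}
    (hC : C ∈ Cs) : ¬ C ⊆ ⋃₀ (Cs \ {C}) := fun hsub => by
  obtain ⟨C', ⟨hC', hne⟩, heC'⟩ := hsub (he ⟨C, hC⟩).1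
  exact hne (congrArg Subtype.val ((he ⟨C, hC⟩).2 ⟨C', hC'⟩ heC'))

lemma IsPrivateChoice.injective (he : IsPrivateChoice Cs e) : Function.Injective e :=
  fun C C' hee => (he C').2 C (hee ▸ (he C).1)

lemma IsPrivateChoice.range_subset_sUnion (he : IsPrivateChoice Cs e) : range e ⊆ ⋃₀ Cs := by
  rintro _ ⟨C, rfl⟩
  exact ⟨C, C.2, (he C).1⟩

lemma IsPrivateChoice.diff_singleton_subset (he : IsPrivateChoice Cs e) (C : Cs) :
    (C : Set α) \ {e C} ⊆ ⋃₀ Cs \ range e := by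
  rintro y ⟨hyC, hye⟩
  refine ⟨⟨C, C.2, hyC⟩, ?_⟩
  rintro ⟨C', rfl⟩
  exact hye (congrArg e ((he C').2 C hyC)).symm

lemma IsPrivateChoice.sUnion_subset_closure {M : Matroid α} (he : IsPrivateChoice Cs e)
    (hcirc : ∀ C ∈ Cs, M.IsCircuit C) : ⋃₀ Cs ⊆ M.closure (⋃₀ Cs \ range e) :=
  sUnion_subset fun C hC => ((hcirc C hC).subset_closure_sdiff_singleton (e ⟨C, hC⟩)).trans
    (M.closure_subset_closure (he.diff_singleton_subset ⟨C, hC⟩))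

lemma IsPrivateChoice.ncard_eq_rk_add_ncard_iff_indep {M : Matroid α}
    (he : IsPrivateChoice Cs e) (hcirc : ∀ C ∈ Cs, M.IsCircuit C) (hfin : (⋃₀ Cs).Finite) :
    (⋃₀ Cs).ncard = rk M (⋃₀ Cs) + Cs.ncard ↔ M.Indep (⋃₀ Cs \ range e) := by
  have hcard : (⋃₀ Cs \ range e).ncard + Cs.ncard = (⋃₀ Cs).ncard := by
    rw [← Nat.card_coe_set_eq Cs, ← ncard_range_of_injective he.injective]
    exact ncard_sdiff_add_ncard_of_subset he.range_subset_sUnion hfin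
  rw [← rk_eq_ncard_iff_indep_of_subset_closure (hfin.subset sdiff_subset) sdiff_subset
    (he.sUnion_subset_closure hcirc)]
  omega

lemma IsPrivateChoice.exists_isBase {M : Matroid α} (he : IsPrivateChoice Cs e)
    (hcirc : ∀ C ∈ Cs, M.IsCircuit C) (hindep : M.Indep (⋃₀ Cs \ range e)) :
    ∃ B, M.IsBase B ∧ ∀ C : Cs, e C ∉ B ∧ (C : Set α) ⊆ insert (e C) B := by
  obtain ⟨B, hB, hXB⟩ := hindep.exists_isBase_superset
  have hsub (C : Cs) : (C : Set α) ⊆ insert (e C) B :=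
    sdiff_singleton_subset_iff.1 ((he.diff_singleton_subset C).trans hXB)
  refine ⟨B, hB, fun C => ⟨fun heB => ?_, hsub C⟩⟩
  exact (hcirc C C.2).not_indep (hB.indep.subset ((hsub C).trans (insert_subset heB subset_rfl)))

end IsPrivateChoice

lemma isPrivateChoice_of_subset_insert {M : Matroid α} {B : Set α} {Cs : Set (Set α)}
    {e : Cs → α} (hB : M.Indep B) (hcirc : ∀ C ∈ Cs, M.IsCircuit C)
    (heB : ∀ C : Cs, e C ∉ B) (hCB : ∀ C : Cs, (C : Set α) ⊆ insert (e C) B) :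
    IsPrivateChoice Cs e := by
  have heC (C : Cs) : e C ∈ (C : Set α) :=
    ((subset_insert_iff.1 (hCB C)).resolve_left fun h => (hcirc C C.2).not_indep (hB.subset h)).1
  refine fun C => ⟨heC C, fun C' heC' => Subtype.ext ?_⟩
  have hee : e C = e C' := ((hCB C') heC').resolve_right (heB C)
  rw [(hcirc C' C'.2).eq_fundCircuit_of_subset hB (hCB C'), ← hee]
  exact ((hcirc C C.2).eq_fundCircuit_of_subset hB (hCB C)).symm

lemma sUnion_diff_range_subset {B : Set α} {Cs : Set (Set α)} {e : Cs → α}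
    (hCB : ∀ C : Cs, (C : Set α) ⊆ insert (e C) B) : ⋃₀ Cs \ range e ⊆ B := by
  rintro y ⟨⟨C, hC, hyC⟩, hye⟩
  exact ((hCB ⟨C, hC⟩) hyC).resolve_left fun h => hye ⟨⟨C, hC⟩, h.symm⟩

/-- A finite collection of circuits is perfect if and only if it is contained in the set of
fundamental circuits with respect to some base. -/
theorem stmt13 {α : Type} (M : Matroid α) (hM : M.E.Finite)
    (Cs : Set (Set α)) (hfin : Cs.Finite) (hcirc : ∀ C ∈ Cs, Circuit M C) :
    Perfect M Cs ↔
      ∃ B, M.IsBase B ∧ ∀ C ∈ Cs, ∃ e, e ∉ B ∧ C ⊆ insert e B ∧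
        ∀ C', Circuit M C' → C' ⊆ insert e B → C' = C := by
  have hcirc' : ∀ C ∈ Cs, M.IsCircuit C := fun C hC => circuit_iff_isCircuit.1 (hcirc C hC)
  have hUfin : (⋃₀ Cs).Finite := hM.subset (sUnion_subset fun C hC => (hcirc' C hC).subset_ground)
  constructor
  · rintro ⟨-, -, hcard, hprivate⟩
    obtain ⟨e, he⟩ := exists_isPrivateChoice hprivate
    obtain ⟨B, hB, hBe⟩ :=
      he.exists_isBase hcirc' ((he.ncard_eq_rk_add_ncard_iff_indep hcirc' hUfin).1 hcard)
    refine ⟨B, hB, fun C hC => ⟨e ⟨C, hC⟩, (hBe ⟨C, hC⟩).1, (hBe ⟨C, hC⟩).2, fun C' hC' hC'B => ?_⟩⟩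
    exact ((circuit_iff_isCircuit.1 hC').eq_fundCircuit_of_subset hB.indep hC'B).trans
      ((hcirc' C hC).eq_fundCircuit_of_subset hB.indep (hBe ⟨C, hC⟩).2).symm
  · rintro ⟨B, hB, hfund⟩
    choose e heB hCB _ using fun C : Cs => hfund C C.2
    have he := isPrivateChoice_of_subset_insert hB.indep hcirc' heB hCB
    refine ⟨hfin, hcirc, ?_, fun C hC => he.not_subset_sUnion_diff hC⟩
    exact (he.ncard_eq_rk_add_ncard_iff_indep hcirc' hUfin).2
      (hB.indep.subset (sUnion_diff_range_subset hCB))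

end PaperLift
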